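/- arXiv:1703.07584 — 5 statements merged into one kernel-verified Lean document; each statement's English description precedes it below -/
import Mathlib

section
/- Define f: ℝ³ → ℝ³ by f₁(b,k,z) = β_k(κ−1+k)k − β_b(1−k)b + 1/(1+(θ_b z)^{h_b}) − b, f₂(b,k,z) = (1/ε)(β_b(1−k)b − β_k(κ−1+k)k), f₃(b,k,z) = δ_z(1−z)k − ρ_z z/(1+(θ_z k)^{h_z}). Then on the boundary of M = [0, 1+β_k κ] × [0,1] × [0,1], the vector field f points inward or is tangent: for every u ∈ ∂M, f(u)·n(u) ≥ 0, where n(u) is the inward normal at a boundary face. In particular: f₁(0,k,z) ≥ 0, f₂(b,0,z) ≥ 0, f₃(b,k,0) ≥ 0, f₁(1+β_k κ, k, z) ≤ 0, f₂(b,1,z) ≤ 0, and f₃(b,k,1) ≤ 0 whenever the remaining coordinates lie in the appropriate intervals of M. -/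
/-!
On each face of `M` the relevant component is a sign check. The only nontrivial face is
`b = 1 + βk κ`: there the Hill term `1 / (1 + (θb z) ^ hbe)` is at most `1` and
`βk (κ - 1 + k) k` is at most `βk κ`, so the decay term `-b` wins.
-/

lemma one_add_pow_pos {x : ℝ} (hx : 0 ≤ x) (n : ℕ) : 0 < 1 + x ^ n := by positivity

lemma one_div_one_add_pow_le_one {x : ℝ} (hx : 0 ≤ x) (n : ℕ) : 1 / (1 + x ^ n) ≤ 1 :=
  div_le_one_of_le₀ (le_add_of_nonneg_right (pow_nonneg hx n)) (one_add_pow_pos hx n).le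

lemma sub_one_add_mul_self_nonneg {κ k : ℝ} (hκ : 1 ≤ κ) (hk : 0 ≤ k) :
    0 ≤ (κ - 1 + k) * k :=
  mul_nonneg (by linarith) hk

lemma sub_one_add_mul_self_le {κ k : ℝ} (hκ : 0 ≤ κ) (hk : k ∈ Set.Icc (0 : ℝ) 1) :
    (κ - 1 + k) * k ≤ κ := by
  obtain ⟨hk0, hk1⟩ := hk
  nlinarith [mul_nonneg (add_nonneg hκ hk0) (sub_nonneg.2 hk1)]

theorem stmt_1_general
    (κ βk βb θb ε δz ρz θz : ℝ) (hbe hze : ℕ)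
    (hκ : 1 ≤ κ) (hβk : 0 < βk) (hβb : 0 < βb) (hθb : 0 < θb) (hε : 0 < ε)
    (hδz : 0 < δz) (hρz : 0 < ρz) (hθz : 0 < θz)
    (f₁ f₂ f₃ : ℝ → ℝ → ℝ → ℝ)
    (hf₁ : ∀ b k z, f₁ b k z =
      βk * (κ - 1 + k) * k - βb * (1 - k) * b + 1 / (1 + (θb * z) ^ hbe) - b)
    (hf₂ : ∀ b k z, f₂ b k z = (1 / ε) * (βb * (1 - k) * b - βk * (κ - 1 + k) * k))
    (hf₃ : ∀ b k z, f₃ b k z = δz * (1 - z) * k - ρz * z / (1 + (θz * k) ^ hze)) :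
    (∀ k ∈ Set.Icc (0 : ℝ) 1, ∀ z ∈ Set.Icc (0 : ℝ) 1, 0 ≤ f₁ 0 k z) ∧
    (∀ b ∈ Set.Icc (0 : ℝ) (1 + βk * κ), ∀ z ∈ Set.Icc (0 : ℝ) 1, 0 ≤ f₂ b 0 z) ∧
    (∀ b ∈ Set.Icc (0 : ℝ) (1 + βk * κ), ∀ k ∈ Set.Icc (0 : ℝ) 1, 0 ≤ f₃ b k 0) ∧
    (∀ k ∈ Set.Icc (0 : ℝ) 1, ∀ z ∈ Set.Icc (0 : ℝ) 1, f₁ (1 + βk * κ) k z ≤ 0) ∧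
    (∀ b ∈ Set.Icc (0 : ℝ) (1 + βk * κ), ∀ z ∈ Set.Icc (0 : ℝ) 1, f₂ b 1 z ≤ 0) ∧
    (∀ b ∈ Set.Icc (0 : ℝ) (1 + βk * κ), ∀ k ∈ Set.Icc (0 : ℝ) 1, f₃ b k 1 ≤ 0) := by
  refine ⟨?_, ?_, ?_, ?_, ?_, ?_⟩
  · rintro k ⟨hk0, -⟩ z ⟨hz0, -⟩
    have hbinding := mul_nonneg hβk.le (sub_one_add_mul_self_nonneg hκ hk0)
    have hhill := one_add_pow_pos (mul_nonneg hθb.le hz0) hbe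
    rw [hf₁]
    have : 0 ≤ 1 / (1 + (θb * z) ^ hbe) := by positivity
    linarith [mul_assoc βk (κ - 1 + k) k]
  · rintro b ⟨hb0, -⟩ z -
    rw [hf₂]
    have : 0 ≤ βb * b := mul_nonneg hβb.le hb0
    simp only [sub_zero, mul_one, add_zero, mul_zero]
    positivity
  · rintro b - k ⟨hk0, -⟩
    rw [hf₃]
    simp only [sub_zero, mul_one, mul_zero, zero_div]
    exact mul_nonneg hδz.le hk0
  · rintro k hk z ⟨hz0, -⟩
    have hbinding := mul_le_mul_of_nonneg_left
      (sub_one_add_mul_self_le (κ := κ) (by linarith) hk) hβk.le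
    have hhill := one_div_one_add_pow_le_one (mul_nonneg hθb.le hz0) hbe
    have hunbinding : 0 ≤ βb * (1 - k) * (1 + βk * κ) :=
      mul_nonneg (mul_nonneg hβb.le (by linarith [hk.2])) (by nlinarith)
    rw [hf₁]
    linarith [mul_assoc βk (κ - 1 + k) k]
  · rintro b - z -
    rw [hf₂]
    simp only [sub_self, mul_zero, zero_mul, zero_sub, sub_add_cancel, mul_one, mul_neg]
    exact neg_nonpos.2 (by positivity)
  · rintro b - k ⟨hk0, -⟩
    have hhill := one_add_pow_pos (mul_nonneg hθz.le hk0) hze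
    rw [hf₃]
    simp only [sub_self, mul_zero, zero_mul, mul_one, zero_sub]
    exact neg_nonpos.2 (by positivity)

/-- On the boundary of `M = [0, 1+βk κ] × [0,1] × [0,1]` the vector field of the
nondimensionalised BR signalling system points inward or is tangent. -/
theorem stmt_1
    (κ βk βb θb ε δz ρz θz : ℝ) (hbe hze : ℕ)
    (hκ : 1 ≤ κ) (hβk : 0 < βk) (hβb : 0 < βb) (hθb : 0 < θb) (hε : 0 < ε)
    (hδz : 0 < δz) (hρz : 0 < ρz) (hθz : 0 < θz) (hhb : 0 < hbe) (hhz : 0 < hze)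
    (f₁ f₂ f₃ : ℝ → ℝ → ℝ → ℝ)
    (hf₁ : ∀ b k z, f₁ b k z =
      βk * (κ - 1 + k) * k - βb * (1 - k) * b + 1 / (1 + (θb * z) ^ hbe) - b)
    (hf₂ : ∀ b k z, f₂ b k z = (1 / ε) * (βb * (1 - k) * b - βk * (κ - 1 + k) * k))
    (hf₃ : ∀ b k z, f₃ b k z = δz * (1 - z) * k - ρz * z / (1 + (θz * k) ^ hze)) :
    (∀ k ∈ Set.Icc (0 : ℝ) 1, ∀ z ∈ Set.Icc (0 : ℝ) 1, 0 ≤ f₁ 0 k z) ∧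
    (∀ b ∈ Set.Icc (0 : ℝ) (1 + βk * κ), ∀ z ∈ Set.Icc (0 : ℝ) 1, 0 ≤ f₂ b 0 z) ∧
    (∀ b ∈ Set.Icc (0 : ℝ) (1 + βk * κ), ∀ k ∈ Set.Icc (0 : ℝ) 1, 0 ≤ f₃ b k 0) ∧
    (∀ k ∈ Set.Icc (0 : ℝ) 1, ∀ z ∈ Set.Icc (0 : ℝ) 1, f₁ (1 + βk * κ) k z ≤ 0) ∧
    (∀ b ∈ Set.Icc (0 : ℝ) (1 + βk * κ), ∀ z ∈ Set.Icc (0 : ℝ) 1, f₂ b 1 z ≤ 0) ∧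
    (∀ b ∈ Set.Icc (0 : ℝ) (1 + βk * κ), ∀ k ∈ Set.Icc (0 : ℝ) 1, f₃ b k 1 ≤ 0) :=
  stmt_1_general κ βk βb θb ε δz ρz θz hbe hze hκ hβk hβb hθb hε hδz hρz hθz f₁ f₂ f₃ hf₁ hf₂ hf₃
end

section
/- For the nondimensionalised BR signalling ODE system db/dt = β_k(κ−1+k)k − β_b(1−k)b + 1/(1+(θ_b z)^{h_b}) − b, dk/dt = (1/ε)(β_b(1−k)b − β_k(κ−1+k)k), dz/dt = δ_z(1−z)k − ρ_z z/(1+(θ_z k)^{h_z}), any solution with initial value in M = [0, 1+β_k κ] × [0,1] × [0,1] remains in M for all t ≥ 0. -/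
/-!
Let `V` be the squared distance of the state `(b, k, z)` to the box `M`. On the boundary of `M`
the vector field points weakly into `M`, and quantitatively: in a neighbourhood of `M`, the
component of the field pointing away from `M` is bounded by a constant times the distance to `M`.
Hence `V' ≤ K V` near every time at which the trajectory lies in `M`, and Grönwall's inequality
shows that the set of times with `V = 0` extends to the right of each of its points. Being closed
and containing `0`, it is all of `[0, ∞)`.
-/

open Set Topology

noncomputable section

lemma hasDerivAt_max_zero_sq (x : ℝ) :
    HasDerivAt (fun y : ℝ => max y 0 ^ 2) (2 * max x 0) x := by
  refine hasDerivAt_of_hasDerivAt_of_ne' (x := 0) (g := fun y => 2 * max y 0) (fun y hy => ?_)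
    (by fun_prop) (by fun_prop) x
  rcases hy.lt_or_gt with hy | hy
  · have h : (fun y : ℝ => max y 0 ^ 2) =ᶠ[𝓝 y] fun _ => 0 := by
      filter_upwards [Iio_mem_nhds hy] with w hw
      simp [(mem_Iio.mp hw).le]
    simpa [hy.le] using (hasDerivAt_const y (0 : ℝ)).congr_of_eventuallyEq h
  · have h : (fun y : ℝ => max y 0 ^ 2) =ᶠ[𝓝 y] fun w => w ^ 2 := by
      filter_upwards [Ioi_mem_nhds hy] with w hw
      simp [(mem_Ioi.mp hw).le]
    simpa [hy.le] using (hasDerivAt_pow 2 y).congr_of_eventuallyEq h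

theorem eq_zero_of_deriv_le_mul_near_zeros {V V' : ℝ → ℝ} {K : ℝ}
    (hV : ∀ t ∈ Ici (0 : ℝ), HasDerivAt V (V' t) t) (hV_nonneg : ∀ t, 0 ≤ V t) (hV0 : V 0 = 0)
    (hbound : ∀ T ∈ Ici (0 : ℝ), V T = 0 → ∀ᶠ t in 𝓝 T, V' t ≤ K * V t) :
    ∀ t ∈ Ici (0 : ℝ), V t = 0 := by
  intro t ht
  have hcont : ContinuousOn V (Ici 0) := fun x hx => (hV x hx).continuousAt.continuousWithinAt
  have hclosed : IsClosed ({x | V x = 0} ∩ Icc 0 t) := by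
    rw [inter_comm]
    exact (hcont.mono Icc_subset_Ici_self).preimage_isClosed_of_isClosed isClosed_Icc
      isClosed_singleton
  refine hclosed.Icc_subset_of_forall_mem_nhdsWithin hV0 (fun T ⟨hVT, hT, _⟩ => ?_) ⟨ht, le_rfl⟩
  obtain ⟨u, hu, hsub⟩ := mem_nhdsGE_iff_exists_Ico_subset.mp
    (nhdsWithin_le_nhds (hbound T hT hVT))
  have hgronwall := le_gronwallBound_of_liminf_deriv_right_le (f := V) (a := T) (b := u)
    (δ := 0) (ε := 0) (hcont.mono fun x hx => le_trans hT hx.1)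
    (fun x hx r hr => (hV x (le_trans hT hx.1)).hasDerivWithinAt.liminf_right_slope_le hr)
    hVT.le (fun x hx => by simpa using hsub hx)
  filter_upwards [Ioo_mem_nhdsGT hu] with x hx
  exact le_antisymm ((hgronwall x (Ioo_subset_Icc_self hx)).trans_eq (gronwallBound_ε0_δ0 _ _))
    (hV_nonneg x)

lemma mul_add_mul_le_mul_of_le {a b c x y D : ℝ} (ha : 0 ≤ a) (hb : 0 ≤ b) (hab : a + b ≤ c)
    (hx : x ≤ D) (hy : y ≤ D) (hD : 0 ≤ D) : a * x + b * y ≤ c * D := by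
  nlinarith

def distIcc (lo hi x : ℝ) : ℝ := max (lo - x) 0 + max (x - hi) 0

def signedDistIcc (lo hi x : ℝ) : ℝ := max (x - hi) 0 - max (lo - x) 0

section distIcc

variable {lo hi x : ℝ}

lemma distIcc_nonneg (lo hi x : ℝ) : 0 ≤ distIcc lo hi x := by
  unfold distIcc; positivity

lemma max_neg_le_distIcc (hi x : ℝ) : max (-x) 0 ≤ distIcc 0 hi x := by
  rw [distIcc, zero_sub]; exact le_add_of_nonneg_right (le_max_right _ _)

lemma max_sub_le_distIcc (lo hi x : ℝ) : max (x - hi) 0 ≤ distIcc lo hi x :=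
  le_add_of_nonneg_left (le_max_right _ _)

lemma distIcc_eq_zero_iff : distIcc lo hi x = 0 ↔ x ∈ Icc lo hi := by
  simp only [distIcc, mem_Icc]
  constructor
  · intro h
    constructor <;> linarith [le_max_left (lo - x) 0, le_max_left (x - hi) 0,
      le_max_right (lo - x) 0, le_max_right (x - hi) 0]
  · rintro ⟨h₁, h₂⟩
    simp [h₁, h₂]

lemma distIcc_sq (h : lo ≤ hi) (x : ℝ) :
    distIcc lo hi x ^ 2 = max (lo - x) 0 ^ 2 + max (x - hi) 0 ^ 2 := by
  have : max (lo - x) 0 * max (x - hi) 0 = 0 := by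
    rcases le_total x lo with hx | hx
    · simp [show x - hi ≤ 0 by linarith]
    · simp [show lo - x ≤ 0 by linarith]
  rw [distIcc]
  linear_combination 2 * this

lemma hasDerivAt_distIcc_sq (h : lo ≤ hi) (x : ℝ) :
    HasDerivAt (fun y => distIcc lo hi y ^ 2) (2 * signedDistIcc lo hi x) x := by
  have hlo := (hasDerivAt_max_zero_sq (lo - x)).comp x ((hasDerivAt_id x).const_sub lo)
  have hhi := (hasDerivAt_max_zero_sq (x - hi)).comp x ((hasDerivAt_id x).sub_const hi)
  rw [funext (distIcc_sq h), signedDistIcc]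
  exact (hlo.add hhi).congr_deriv (by ring)

lemma signedDistIcc_mul_le (h : lo ≤ hi) {v c : ℝ} (hlo : x < lo → -v ≤ c)
    (hhi : hi < x → v ≤ c) : signedDistIcc lo hi x * v ≤ distIcc lo hi x * c := by
  simp only [signedDistIcc, distIcc]
  rcases lt_or_ge x lo with hx | hx
  · simp only [max_eq_left (sub_nonneg.mpr hx.le), max_eq_right (by linarith : x - hi ≤ 0)]
    nlinarith [hlo hx]
  rcases lt_or_ge hi x with hx' | hx'
  · simp only [max_eq_right (by linarith : lo - x ≤ 0), max_eq_left (sub_nonneg.mpr hx'.le)]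
    nlinarith [hhi hx']
  · simp [hx, hx']

lemma signedDistIcc_mul_le_mul_sq (h : lo ≤ hi) {v c D : ℝ} (hc : 0 ≤ c)
    (hD : distIcc lo hi x ≤ D) (hlo : x < lo → -v ≤ c * D) (hhi : hi < x → v ≤ c * D) :
    signedDistIcc lo hi x * v ≤ c * D ^ 2 :=
  calc _ ≤ distIcc lo hi x * (c * D) := signedDistIcc_mul_le h hlo hhi
    _ ≤ D * (c * D) :=
      mul_le_mul_of_nonneg_right hD (mul_nonneg hc ((distIcc_nonneg _ _ _).trans hD))
    _ = c * D ^ 2 := by ring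

end distIcc

section box

variable {B b k z : ℝ}

def boxDist (B b k z : ℝ) : ℝ := distIcc 0 B b + distIcc 0 1 k + distIcc 0 1 z

def boxDistSq (B b k z : ℝ) : ℝ := distIcc 0 B b ^ 2 + distIcc 0 1 k ^ 2 + distIcc 0 1 z ^ 2

lemma distIcc_le_boxDist_b : distIcc 0 B b ≤ boxDist B b k z := by
  unfold boxDist; linarith [distIcc_nonneg 0 1 k, distIcc_nonneg 0 1 z]

lemma distIcc_le_boxDist_k : distIcc 0 1 k ≤ boxDist B b k z := by
  unfold boxDist; linarith [distIcc_nonneg 0 B b, distIcc_nonneg 0 1 z]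

lemma distIcc_le_boxDist_z : distIcc 0 1 z ≤ boxDist B b k z := by
  unfold boxDist; linarith [distIcc_nonneg 0 B b, distIcc_nonneg 0 1 k]

lemma boxDist_nonneg (B b k z : ℝ) : 0 ≤ boxDist B b k z := by
  unfold boxDist; linarith [distIcc_nonneg 0 B b, distIcc_nonneg 0 1 k, distIcc_nonneg 0 1 z]

lemma boxDistSq_nonneg (B b k z : ℝ) : 0 ≤ boxDistSq B b k z := by
  unfold boxDistSq; positivity

lemma sq_boxDist_le (B b k z : ℝ) : boxDist B b k z ^ 2 ≤ 3 * boxDistSq B b k z := by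
  unfold boxDist boxDistSq
  nlinarith [sq_nonneg (distIcc 0 B b - distIcc 0 1 k), sq_nonneg (distIcc 0 B b - distIcc 0 1 z),
    sq_nonneg (distIcc 0 1 k - distIcc 0 1 z)]

lemma boxDistSq_eq_zero_iff : boxDistSq B b k z = 0 ↔ b ∈ Icc 0 B ∧ k ∈ Icc 0 1 ∧ z ∈ Icc 0 1 := by
  unfold boxDistSq
  rw [add_eq_zero_iff_of_nonneg (by positivity) (by positivity),
    add_eq_zero_iff_of_nonneg (by positivity) (by positivity)]
  simp only [pow_eq_zero_iff two_ne_zero, distIcc_eq_zero_iff, and_assoc]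

lemma hasDerivAt_boxDistSq (hB : 0 ≤ B) {b k z : ℝ → ℝ} {b' k' z' t : ℝ}
    (hb : HasDerivAt b b' t) (hk : HasDerivAt k k' t) (hz : HasDerivAt z z' t) :
    HasDerivAt (fun t => boxDistSq B (b t) (k t) (z t))
      (2 * (signedDistIcc 0 B (b t) * b' + signedDistIcc 0 1 (k t) * k'
        + signedDistIcc 0 1 (z t) * z')) t :=
  ((((hasDerivAt_distIcc_sq hB _).comp t hb).add
    ((hasDerivAt_distIcc_sq zero_le_one _).comp t hk)).add
    ((hasDerivAt_distIcc_sq zero_le_one _).comp t hz)).congr_deriv (by ring)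

end box

lemma min_zero_le_pow {u : ℝ} (n : ℕ) (hu : -1 ≤ u) : min u 0 ≤ u ^ n := by
  rcases le_total u 0 with h | h
  · rw [min_eq_left h]
    rcases n with _ | n
    · simp only [pow_zero]; linarith
    · have : |u| ^ (n + 1) ≤ |u| :=
        pow_le_of_le_one (abs_nonneg u) (abs_le.mpr ⟨hu, by linarith⟩) n.succ_ne_zero
      rw [← abs_pow] at this
      linarith [neg_abs_le (u ^ (n + 1)), abs_of_nonpos h]
  · rw [min_eq_right h]; exact pow_nonneg h n

lemma one_add_pow_nonneg {u : ℝ} (n : ℕ) (hu : -1 ≤ u) : 0 ≤ 1 + u ^ n := by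
  linarith [min_zero_le_pow n hu, le_min hu (by norm_num : (-1 : ℝ) ≤ 0)]

lemma one_div_one_add_pow_le {θ w : ℝ} (n : ℕ) (hθ : 0 ≤ θ) (hw : -1 / 2 ≤ θ * w) :
    1 / (1 + (θ * w) ^ n) ≤ 1 + 2 * θ * max (-w) 0 := by
  rcases le_total 0 w with h | h
  · have : 1 ≤ 1 + (θ * w) ^ n := le_add_of_nonneg_right (pow_nonneg (by positivity) n)
    calc 1 / (1 + (θ * w) ^ n) ≤ 1 := div_le_one_of_le₀ this (by positivity)
      _ ≤ 1 + 2 * θ * max (-w) 0 := le_add_of_nonneg_right (by positivity)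
  · have hden : 1 + θ * w ≤ 1 + (θ * w) ^ n := by
      have := min_zero_le_pow n (by linarith : -1 ≤ θ * w)
      rw [min_eq_left (mul_nonpos_of_nonneg_of_nonpos hθ h)] at this
      linarith
    rw [max_eq_left (neg_nonneg.mpr h), div_le_iff₀ (by linarith)]
    nlinarith [mul_nonpos_of_nonneg_of_nonpos hθ h]

def fieldB (κ βk βb θb : ℝ) (hbe : ℕ) (b k z : ℝ) : ℝ :=
  βk * (κ - 1 + k) * k - βb * (1 - k) * b + 1 / (1 + (θb * z) ^ hbe) - b

def fieldK (κ βk βb ε : ℝ) (b k : ℝ) : ℝ :=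
  (1 / ε) * (βb * (1 - k) * b - βk * (κ - 1 + k) * k)

def fieldZ (δz ρz θz : ℝ) (hze : ℕ) (k z : ℝ) : ℝ :=
  δz * (1 - z) * k - ρz * z / (1 + (θz * k) ^ hze)

/-- A neighbourhood of `M = [0, B] × [0, 1] × [0, 1]` on which the Hill denominator of `fieldB` is
at least `1/2` and that of `fieldZ` is nonnegative. -/
def NearBox (B θb θz b k z : ℝ) : Prop :=
  -1 ≤ b ∧ b ≤ B + 1 ∧ -1 ≤ k ∧ k ≤ 2 ∧ -1 ≤ z ∧ -1 / 2 ≤ θb * z ∧ -1 ≤ θz * k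

lemma eventually_nearBox {B θb θz T : ℝ} {b k z : ℝ → ℝ} (hθb : 0 ≤ θb) (hθz : 0 ≤ θz)
    (hb : ContinuousAt b T) (hk : ContinuousAt k T) (hz : ContinuousAt z T)
    (hT : b T ∈ Icc 0 B ∧ k T ∈ Icc 0 1 ∧ z T ∈ Icc 0 1) :
    ∀ᶠ t in 𝓝 T, NearBox B θb θz (b t) (k t) (z t) := by
  obtain ⟨⟨hb₀, hb₁⟩, ⟨hk₀, hk₁⟩, ⟨hz₀, -⟩⟩ := hT
  filter_upwards [hb.eventually (Ioo_mem_nhds (by linarith : -1 < b T) (by linarith : b T < B + 1)),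
    hk.eventually (Ioo_mem_nhds (by linarith : -1 < k T) (by linarith : k T < 2)),
    hz.eventually (Ioi_mem_nhds (by linarith : -1 < z T)),
    (hz.const_mul θb).eventually (Ioi_mem_nhds (by nlinarith : -1 / 2 < θb * z T)),
    (hk.const_mul θz).eventually (Ioi_mem_nhds (by nlinarith : -1 < θz * k T))]
    with t hbt hkt hzt hθbz hθzk
  exact ⟨hbt.1.le, hbt.2.le, hkt.1.le, hkt.2.le, hzt.le, hθbz.le, hθzk.le⟩

section field

variable {κ βk βb θb ε δz ρz θz b k z : ℝ} {hbe hze : ℕ}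

lemma neg_fieldB_le (hκ : 1 ≤ κ) (hβk : 0 ≤ βk) (hβb : 0 ≤ βb) (hk : k ≤ 2)
    (hz : -1 ≤ θb * z) (hb : b < 0) :
    -fieldB κ βk βb θb hbe b k z
      ≤ βk * κ * distIcc 0 1 k + βb * distIcc 0 (1 + βk * κ) b := by
  have hkk : -((κ - 1 + k) * k) ≤ κ * max (-k) 0 := by
    rcases le_total 0 k with h | h
    · nlinarith [le_max_right (-k) 0]
    · rw [max_eq_left (neg_nonneg.mpr h)]; nlinarith
  have hkb : (1 - k) * b ≤ max (-b) 0 := by nlinarith [le_max_left (-b) 0]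
  have hhill : 0 ≤ 1 / (1 + (θb * z) ^ hbe) := one_div_nonneg.mpr (one_add_pow_nonneg _ hz)
  have e₁ := mul_le_mul_of_nonneg_left (hkk.trans
    (mul_le_mul_of_nonneg_left (max_neg_le_distIcc 1 k) (by linarith))) hβk
  have e₂ := mul_le_mul_of_nonneg_left (hkb.trans (max_neg_le_distIcc (1 + βk * κ) b)) hβb
  unfold fieldB
  linarith

lemma fieldB_le (hκ : 1 ≤ κ) (hβk : 0 ≤ βk) (hβb : 0 ≤ βb) (hθb : 0 ≤ θb)
    (hk : -1 ≤ k) (hk' : k ≤ 2) (hb' : b ≤ 1 + βk * κ + 1) (hz : -1 / 2 ≤ θb * z)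
    (hb : 1 + βk * κ < b) :
    fieldB κ βk βb θb hbe b k z ≤
      (βk * (κ + 2) + βb * (βk * κ + 2)) * distIcc 0 1 k + 2 * θb * distIcc 0 1 z := by
  have hkk : (κ - 1 + k) * k ≤ κ + (κ + 2) * max (k - 1) 0 := by
    rcases le_total k 1 with h | h
    · nlinarith [le_max_right (k - 1) 0]
    · rw [max_eq_left (sub_nonneg.mpr h)]; nlinarith
  have hkb : -((1 - k) * b) ≤ (βk * κ + 2) * max (k - 1) 0 := by
    rcases le_total k 1 with h | h
    · nlinarith [le_max_right (k - 1) 0, mul_nonneg hβk (by linarith : (0 : ℝ) ≤ κ)]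
    · rw [max_eq_left (sub_nonneg.mpr h)]; nlinarith
  have hhill := one_div_one_add_pow_le hbe hθb hz
  have e₁ := mul_le_mul_of_nonneg_left hkk hβk
  have e₂ := mul_le_mul_of_nonneg_left hkb hβb
  have e₃ := mul_le_mul_of_nonneg_left (max_sub_le_distIcc 0 1 k)
    (by positivity : 0 ≤ βk * (κ + 2) + βb * (βk * κ + 2))
  have e₄ := mul_le_mul_of_nonneg_left (max_neg_le_distIcc 1 z) (by positivity : 0 ≤ 2 * θb)
  unfold fieldB
  linarith

lemma neg_fieldK_le (hκ : 1 ≤ κ) (hβk : 0 ≤ βk) (hβb : 0 ≤ βb) (hε : 0 ≤ ε) (hk' : -1 ≤ k)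
    (hk : k < 0) :
    -fieldK κ βk βb ε b k ≤ βk / ε * distIcc 0 1 k + 2 * βb / ε * distIcc 0 (1 + βk * κ) b := by
  have hkk : (κ - 1 + k) * k ≤ distIcc 0 1 k := by
    nlinarith [le_max_left (-k) 0, max_neg_le_distIcc 1 k]
  have hkb : -((1 - k) * b) ≤ 2 * distIcc 0 (1 + βk * κ) b := by
    rcases le_total 0 b with h | h
    · nlinarith [distIcc_nonneg 0 (1 + βk * κ) b]
    · nlinarith [le_max_left (-b) 0, max_neg_le_distIcc (1 + βk * κ) b]
  have e₁ := mul_le_mul_of_nonneg_left hkk (div_nonneg hβk hε)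
  have e₂ := mul_le_mul_of_nonneg_left hkb (div_nonneg hβb hε)
  have e₃ : -fieldK κ βk βb ε b k = βk / ε * ((κ - 1 + k) * k) + βb / ε * -((1 - k) * b) := by
    rw [fieldK]; ring
  have e₄ : 2 * βb / ε * distIcc 0 (1 + βk * κ) b
      = βb / ε * (2 * distIcc 0 (1 + βk * κ) b) := by ring
  linarith

lemma fieldK_le (hκ : 1 ≤ κ) (hβk : 0 ≤ βk) (hβb : 0 ≤ βb) (hε : 0 ≤ ε) (hb : -1 ≤ b)
    (hk : 1 < k) :
    fieldK κ βk βb ε b k ≤ βb / ε * distIcc 0 1 k := by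
  have hkb : (1 - k) * b ≤ distIcc 0 1 k := by
    nlinarith [le_max_left (k - 1) 0, max_sub_le_distIcc 0 1 k]
  have hkk : 0 ≤ (κ - 1 + k) * k := by nlinarith
  have e₁ := mul_le_mul_of_nonneg_left hkb (div_nonneg hβb hε)
  have e₂ := mul_nonneg (div_nonneg hβk hε) hkk
  have e₃ : fieldK κ βk βb ε b k = βb / ε * ((1 - k) * b) - βk / ε * ((κ - 1 + k) * k) := by
    rw [fieldK]; ring
  linarith

lemma neg_fieldZ_le (hδz : 0 ≤ δz) (hρz : 0 ≤ ρz) (hk : -1 ≤ θz * k) (hz' : -1 ≤ z)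
    (hz : z < 0) :
    -fieldZ δz ρz θz hze k z ≤ 2 * δz * distIcc 0 1 k := by
  have hkz : -((1 - z) * k) ≤ 2 * distIcc 0 1 k := by
    rcases le_total 0 k with h | h
    · nlinarith [distIcc_nonneg 0 1 k]
    · nlinarith [le_max_left (-k) 0, max_neg_le_distIcc 1 k]
  have hdecay : ρz * z / (1 + (θz * k) ^ hze) ≤ 0 :=
    div_nonpos_of_nonpos_of_nonneg (mul_nonpos_of_nonneg_of_nonpos hρz hz.le)
      (one_add_pow_nonneg _ hk)
  have e₁ := mul_le_mul_of_nonneg_left hkz hδz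
  unfold fieldZ
  linarith

lemma fieldZ_le (hδz : 0 ≤ δz) (hρz : 0 ≤ ρz) (hk : -1 ≤ θz * k) (hk' : -1 ≤ k)
    (hz : 1 < z) :
    fieldZ δz ρz θz hze k z ≤ δz * distIcc 0 1 z := by
  have hkz : (1 - z) * k ≤ distIcc 0 1 z := by
    nlinarith [le_max_left (z - 1) 0, max_sub_le_distIcc 0 1 z]
  have hdecay : 0 ≤ ρz * z / (1 + (θz * k) ^ hze) :=
    div_nonneg (mul_nonneg hρz (by linarith)) (one_add_pow_nonneg _ hk)
  have e₁ := mul_le_mul_of_nonneg_left hkz hδz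
  unfold fieldZ
  linarith

lemma signedDistIcc_mul_fieldB_le (hκ : 1 ≤ κ) (hβk : 0 ≤ βk) (hβb : 0 ≤ βb) (hθb : 0 ≤ θb)
    (h : NearBox (1 + βk * κ) θb θz b k z) :
    signedDistIcc 0 (1 + βk * κ) b * fieldB κ βk βb θb hbe b k z
      ≤ (βk * (κ + 2) + βb * (βk * κ + 2) + 2 * θb) * boxDist (1 + βk * κ) b k z ^ 2 := by
  obtain ⟨-, hb', hk, hk', -, hzb, -⟩ := h
  have hβkκ : 0 ≤ βk * κ := by nlinarith
  have hD := boxDist_nonneg (1 + βk * κ) b k z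
  refine signedDistIcc_mul_le_mul_sq (by positivity) (by positivity) distIcc_le_boxDist_b
    (fun hb₀ => ?_) (fun hb₀ => ?_)
  · exact (neg_fieldB_le hκ hβk hβb hk' (by linarith) hb₀).trans (mul_add_mul_le_mul_of_le
      hβkκ hβb (by nlinarith) distIcc_le_boxDist_k distIcc_le_boxDist_b hD)
  · exact (fieldB_le hκ hβk hβb hθb hk hk' hb' hzb hb₀).trans (mul_add_mul_le_mul_of_le
      (by positivity) (by positivity) le_rfl distIcc_le_boxDist_k distIcc_le_boxDist_z hD)

lemma signedDistIcc_mul_fieldK_le (hκ : 1 ≤ κ) (hβk : 0 ≤ βk) (hβb : 0 ≤ βb) (hε : 0 ≤ ε)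
    (h : NearBox (1 + βk * κ) θb θz b k z) :
    signedDistIcc 0 1 k * fieldK κ βk βb ε b k
      ≤ (βk / ε + 2 * βb / ε) * boxDist (1 + βk * κ) b k z ^ 2 := by
  obtain ⟨hb, -, hk, -, -, -, -⟩ := h
  have hD := boxDist_nonneg (1 + βk * κ) b k z
  refine signedDistIcc_mul_le_mul_sq zero_le_one (by positivity) distIcc_le_boxDist_k
    (fun hk₀ => ?_) (fun hk₀ => ?_)
  · exact (neg_fieldK_le hκ hβk hβb hε hk hk₀).trans (mul_add_mul_le_mul_of_le
      (by positivity) (by positivity) le_rfl distIcc_le_boxDist_k distIcc_le_boxDist_b hD)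
  · exact (fieldK_le hκ hβk hβb hε hb hk₀).trans (mul_le_mul
      (by linarith [mul_div_assoc (2 : ℝ) βb ε, div_nonneg hβk hε, div_nonneg hβb hε])
      distIcc_le_boxDist_k (distIcc_nonneg _ _ _) (by positivity))

lemma signedDistIcc_mul_fieldZ_le (hδz : 0 ≤ δz) (hρz : 0 ≤ ρz)
    (h : NearBox (1 + βk * κ) θb θz b k z) :
    signedDistIcc 0 1 z * fieldZ δz ρz θz hze k z ≤ 2 * δz * boxDist (1 + βk * κ) b k z ^ 2 := by
  obtain ⟨-, -, hk, -, hz, -, hkz⟩ := h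
  refine signedDistIcc_mul_le_mul_sq zero_le_one (by positivity) distIcc_le_boxDist_z
    (fun hz₀ => ?_) (fun hz₀ => ?_)
  · exact (neg_fieldZ_le hδz hρz hkz hz hz₀).trans (mul_le_mul_of_nonneg_left
      distIcc_le_boxDist_k (by positivity))
  · exact (fieldZ_le hδz hρz hkz hk hz₀).trans (mul_le_mul (by linarith) distIcc_le_boxDist_z
      (distIcc_nonneg _ _ _) (by positivity))

lemma exists_signedDistIcc_mul_field_le (hκ : 1 ≤ κ) (hβk : 0 ≤ βk) (hβb : 0 ≤ βb)
    (hθb : 0 ≤ θb) (hε : 0 ≤ ε) (hδz : 0 ≤ δz) (hρz : 0 ≤ ρz) :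
    ∃ K, ∀ b k z : ℝ, NearBox (1 + βk * κ) θb θz b k z →
      signedDistIcc 0 (1 + βk * κ) b * fieldB κ βk βb θb hbe b k z
          + signedDistIcc 0 1 k * fieldK κ βk βb ε b k
          + signedDistIcc 0 1 z * fieldZ δz ρz θz hze k z
        ≤ K * boxDistSq (1 + βk * κ) b k z := by
  set c := (βk * (κ + 2) + βb * (βk * κ + 2) + 2 * θb) + (βk / ε + 2 * βb / ε) + 2 * δz
  have hc : 0 ≤ c := by positivity
  refine ⟨3 * c, fun b k z h => ?_⟩
  calc _ ≤ c * boxDist (1 + βk * κ) b k z ^ 2 := by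
        linarith [signedDistIcc_mul_fieldB_le (hbe := hbe) hκ hβk hβb hθb h,
          signedDistIcc_mul_fieldK_le hκ hβk hβb hε h,
          signedDistIcc_mul_fieldZ_le (hze := hze) hδz hρz h]
    _ ≤ c * (3 * boxDistSq (1 + βk * κ) b k z) :=
      mul_le_mul_of_nonneg_left (sq_boxDist_le _ _ _ _) hc
    _ = 3 * c * boxDistSq (1 + βk * κ) b k z := by ring

end field

theorem stmt_2_general
    (κ βk βb θb ε δz ρz θz : ℝ) (hbe hze : ℕ)
    (hκ : 1 ≤ κ) (hβk : 0 < βk) (hβb : 0 < βb) (hθb : 0 < θb) (hε : 0 < ε)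
    (hδz : 0 < δz) (hρz : 0 < ρz) (hθz : 0 < θz)
    (b k z : ℝ → ℝ)
    (hb : ∀ t ∈ Set.Ici (0 : ℝ), HasDerivAt b
      (βk * (κ - 1 + k t) * k t - βb * (1 - k t) * b t
        + 1 / (1 + (θb * z t) ^ hbe) - b t) t)
    (hk : ∀ t ∈ Set.Ici (0 : ℝ), HasDerivAt k
      ((1 / ε) * (βb * (1 - k t) * b t - βk * (κ - 1 + k t) * k t)) t)
    (hz : ∀ t ∈ Set.Ici (0 : ℝ), HasDerivAt z
      (δz * (1 - z t) * k t - ρz * z t / (1 + (θz * k t) ^ hze)) t)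
    (hb0 : b 0 ∈ Set.Icc (0 : ℝ) (1 + βk * κ))
    (hk0 : k 0 ∈ Set.Icc (0 : ℝ) 1)
    (hz0 : z 0 ∈ Set.Icc (0 : ℝ) 1) :
    ∀ t ∈ Set.Ici (0 : ℝ),
      b t ∈ Set.Icc (0 : ℝ) (1 + βk * κ) ∧ k t ∈ Set.Icc (0 : ℝ) 1 ∧
        z t ∈ Set.Icc (0 : ℝ) 1 := by
  have hB : 0 ≤ 1 + βk * κ := by nlinarith
  obtain ⟨K, hK⟩ := exists_signedDistIcc_mul_field_le (θz := θz) (hbe := hbe) (hze := hze)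
    hκ hβk.le hβb.le hθb.le hε.le hδz.le hρz.le
  have hV : ∀ t ∈ Ici (0 : ℝ), HasDerivAt (fun t => boxDistSq (1 + βk * κ) (b t) (k t) (z t))
      (2 * (signedDistIcc 0 (1 + βk * κ) (b t) * fieldB κ βk βb θb hbe (b t) (k t) (z t)
        + signedDistIcc 0 1 (k t) * fieldK κ βk βb ε (b t) (k t)
        + signedDistIcc 0 1 (z t) * fieldZ δz ρz θz hze (k t) (z t))) t :=
    fun t ht => hasDerivAt_boxDistSq hB (hb t ht) (hk t ht) (hz t ht)
  have hM := eq_zero_of_deriv_le_mul_near_zeros (K := 2 * K) hV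
    (fun t => boxDistSq_nonneg _ _ _ _) (boxDistSq_eq_zero_iff.mpr ⟨hb0, hk0, hz0⟩)
    fun T hT hVT => by
      filter_upwards [eventually_nearBox hθb.le hθz.le (hb T hT).continuousAt
        (hk T hT).continuousAt (hz T hT).continuousAt (boxDistSq_eq_zero_iff.mp hVT)] with t ht
      linarith [hK _ _ _ ht]
  exact fun t ht => boxDistSq_eq_zero_iff.mp (hM t ht)

/-- Positive invariance of `M = [0, 1+βk κ] × [0,1] × [0,1]` for the nondimensionalised
BR signalling ODE system. -/
theorem stmt_2
    (κ βk βb θb ε δz ρz θz : ℝ) (hbe hze : ℕ)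
    (hκ : 1 ≤ κ) (hβk : 0 < βk) (hβb : 0 < βb) (hθb : 0 < θb) (hε : 0 < ε)
    (hδz : 0 < δz) (hρz : 0 < ρz) (hθz : 0 < θz) (hhb : 0 < hbe) (hhz : 0 < hze)
    (b k z : ℝ → ℝ)
    (hb : ∀ t ∈ Set.Ici (0 : ℝ), HasDerivAt b
      (βk * (κ - 1 + k t) * k t - βb * (1 - k t) * b t
        + 1 / (1 + (θb * z t) ^ hbe) - b t) t)
    (hk : ∀ t ∈ Set.Ici (0 : ℝ), HasDerivAt k
      ((1 / ε) * (βb * (1 - k t) * b t - βk * (κ - 1 + k t) * k t)) t)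
    (hz : ∀ t ∈ Set.Ici (0 : ℝ), HasDerivAt z
      (δz * (1 - z t) * k t - ρz * z t / (1 + (θz * k t) ^ hze)) t)
    (hb0 : b 0 ∈ Set.Icc (0 : ℝ) (1 + βk * κ))
    (hk0 : k 0 ∈ Set.Icc (0 : ℝ) 1)
    (hz0 : z 0 ∈ Set.Icc (0 : ℝ) 1) :
    ∀ t ∈ Set.Ici (0 : ℝ),
      b t ∈ Set.Icc (0 : ℝ) (1 + βk * κ) ∧ k t ∈ Set.Icc (0 : ℝ) 1 ∧
        z t ∈ Set.Icc (0 : ℝ) 1 :=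
  stmt_2_general κ βk βb θb ε δz ρz θz hbe hze hκ hβk hβb hθb hε hδz hρz hθz b k z hb hk hz hb0 hk0
    hz0
end
end

section
/- The function g(k) = β_k(κ−1+k)·k·(1 + (θ_b δ_z k (1+(θ_z k)^{h_z}) / (ρ_z + δ_z k (1+(θ_z k)^{h_z})))^{h_b}) − β_b(1−k) is strictly increasing on [0,1]; in particular its derivative satisfies g'(k) ≥ β_b > 0 for all k ∈ [0,1]. -/
/-!
Writing `N k = δz k (1 + (θz k)^hze)`, the function `H = θb N / (ρz + N)` has derivative
`θb ρz N' / (ρz + N)²` with `N' = δz (1 + (1 + hze)(θz k)^hze)`, which gives the formula for `g'`.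
For `k ≥ 0` every summand of `g' - βb` is a product of nonnegative factors (`κ ≥ 1`, `H ≥ 0`),
so `g' ≥ βb > 0` and the mean value theorem makes `g` strictly increasing.
-/

theorem HasDerivAt.div_const_add_self {f : ℝ → ℝ} {f' ρ k : ℝ} (hf : HasDerivAt f f' k)
    (hk : ρ + f k ≠ 0) :
    HasDerivAt (fun x => f x / (ρ + f x)) (ρ * f' / (ρ + f k) ^ 2) k :=
  (hf.fun_div (hf.const_add ρ) hk).congr_deriv (by ring)

theorem hasDerivAt_mul_one_add_pow (c k : ℝ) (n : ℕ) :
    HasDerivAt (fun x => x * (1 + (c * x) ^ n)) (1 + (1 + n) * (c * k) ^ n) k := by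
  have hpow : HasDerivAt (fun x => (c * x) ^ n) (n * (c * k) ^ (n - 1) * c) k := by
    simpa using ((hasDerivAt_id k).const_mul c).fun_pow n
  refine ((hasDerivAt_id' k).fun_mul (hpow.const_add 1)).congr_deriv ?_
  cases n with
  | zero => simp
  | succ n => rw [Nat.add_sub_cancel, pow_succ]; push_cast; ring

theorem hasDerivAt_hill (θ δ ρ c : ℝ) (n : ℕ) {k : ℝ}
    (hk : ρ + δ * k * (1 + (c * k) ^ n) ≠ 0) :
    HasDerivAt (fun x => θ * δ * x * (1 + (c * x) ^ n) / (ρ + δ * x * (1 + (c * x) ^ n)))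
      (θ * δ * ρ * (1 + (1 + n) * (c * k) ^ n) / (ρ + δ * k * (1 + (c * k) ^ n)) ^ 2) k := by
  have hN := (hasDerivAt_mul_one_add_pow c k n).const_mul δ
  have hH := (hN.div_const_add_self (ρ := ρ) (by simpa only [mul_assoc] using hk)).const_mul θ
  have hfun : (fun x => θ * δ * x * (1 + (c * x) ^ n) / (ρ + δ * x * (1 + (c * x) ^ n))) =
      fun x => θ * (δ * (x * (1 + (c * x) ^ n)) / (ρ + δ * (x * (1 + (c * x) ^ n)))) := by
    funext x; ring
  rw [hfun]
  exact hH.congr_deriv (by ring)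

theorem stmt_5_general
    (κ βk βb θb δz ρz θz : ℝ) (hbe hze : ℕ)
    (hκ : 1 ≤ κ) (hβk : 0 < βk) (hβb : 0 < βb) (hθb : 0 < θb)
    (hδz : 0 < δz) (hρz : 0 < ρz) (hθz : 0 < θz)
    (g H g' : ℝ → ℝ)
    (hH : ∀ k, H k = θb * δz * k * (1 + (θz * k) ^ hze)
        / (ρz + δz * k * (1 + (θz * k) ^ hze)))
    (hg : ∀ k, g k = βk * (κ - 1 + k) * k * (1 + (H k) ^ hbe) - βb * (1 - k))
    (hg' : ∀ k, g' k = βb + βk * (κ - 1 + 2 * k) * (1 + (H k) ^ hbe)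
      + βk * (κ - 1 + k) * k *
        ((hbe : ℝ) * (H k) ^ (hbe - 1) *
          (θb * δz * ρz * (1 + (1 + (hze : ℝ)) * (θz * k) ^ hze)
            / (ρz + δz * k * (1 + (θz * k) ^ hze)) ^ 2))) :
    StrictMonoOn g (Set.Icc (0 : ℝ) 1) ∧
    (∀ k ∈ Set.Icc (0 : ℝ) 1, HasDerivAt g (g' k) k ∧ βb ≤ g' k) := by
  have hκ' : 0 ≤ κ - 1 := sub_nonneg.2 hκ
  have hH_nonneg (k : ℝ) (hk : 0 ≤ k) : 0 ≤ H k := by rw [hH]; positivity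
  have hg_deriv (k : ℝ) (hk : 0 ≤ k) : HasDerivAt g (g' k) k := by
    have hHd : HasDerivAt H _ k :=
      funext hH ▸ hasDerivAt_hill θb δz ρz θz hze (by positivity)
    have hP := ((hasDerivAt_id' k).const_add (κ - 1)).fun_mul (hasDerivAt_id' k)
    have hg_eq : g = fun x => βk * ((κ - 1 + x) * x * (1 + H x ^ hbe)) - βb * (1 - x) :=
      funext fun x => by rw [hg]; ring
    rw [hg_eq]
    refine (((hP.fun_mul ((hHd.fun_pow hbe).const_add 1)).const_mul βk).fun_sub
      (((hasDerivAt_id' k).const_sub 1).const_mul βb)).congr_deriv ?_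
    rw [hg']; ring
  have hg'_ge (k : ℝ) (hk : 0 ≤ k) : βb ≤ g' k := by
    have := hH_nonneg k hk
    rw [hg', add_assoc]
    exact le_add_of_nonneg_right (by positivity)
  refine ⟨strictMonoOn_of_deriv_pos (convex_Icc 0 1)
    (fun k hk => (hg_deriv k hk.1).continuousAt.continuousWithinAt) fun k hk => ?_,
    fun k hk => ⟨hg_deriv k hk.1, hg'_ge k hk.1⟩⟩
  rw [interior_Icc] at hk
  rw [(hg_deriv k hk.1.le).deriv]
  exact hβb.trans_le (hg'_ge k hk.1.le)

/-- The steady-state function `g` is strictly increasing on `[0,1]`, with derivative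
bounded below by `βb > 0`. -/
theorem stmt_5
    (κ βk βb θb δz ρz θz : ℝ) (hbe hze : ℕ)
    (hκ : 1 ≤ κ) (hβk : 0 < βk) (hβb : 0 < βb) (hθb : 0 < θb)
    (hδz : 0 < δz) (hρz : 0 < ρz) (hθz : 0 < θz) (hhb : 0 < hbe) (hhz : 0 < hze)
    (g H g' : ℝ → ℝ)
    (hH : ∀ k, H k = θb * δz * k * (1 + (θz * k) ^ hze)
        / (ρz + δz * k * (1 + (θz * k) ^ hze)))
    (hg : ∀ k, g k = βk * (κ - 1 + k) * k * (1 + (H k) ^ hbe) - βb * (1 - k))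
    (hg' : ∀ k, g' k = βb + βk * (κ - 1 + 2 * k) * (1 + (H k) ^ hbe)
      + βk * (κ - 1 + k) * k *
        ((hbe : ℝ) * (H k) ^ (hbe - 1) *
          (θb * δz * ρz * (1 + (1 + (hze : ℝ)) * (θz * k) ^ hze)
            / (ρz + δz * k * (1 + (θz * k) ^ hze)) ^ 2))) :
    StrictMonoOn g (Set.Icc (0 : ℝ) 1) ∧
    (∀ k ∈ Set.Icc (0 : ℝ) 1, HasDerivAt g (g' k) k ∧ βb ≤ g' k) :=
  stmt_5_general κ βk βb θb δz ρz θz hbe hze hκ hβk hβb hθb hδz hρz hθz g H g' hH hg hg'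
end

section
/- For each parameter set with κ ≥ 1 and all of β_k, β_b, θ_b, ε, δ_z, ρ_z, θ_z positive and h_b, h_z positive naturals, the nondimensionalised BR signalling system f₁ = β_k(κ−1+k)k − β_b(1−k)b + 1/(1+(θ_b z)^{h_b}) − b = 0, f₂ = β_b(1−k)b − β_k(κ−1+k)k = 0, f₃ = δ_z(1−z)k − ρ_z z/(1+(θ_z k)^{h_z}) = 0 has exactly one solution (b*,k*,z*) in M = [0,1+β_k κ]×[0,1]². Moreover b* = β_k(κ−1+k*)k*/(β_b(1−k*)) and z* = δ_z k*(1+(θ_z k*)^{h_z})/(ρ_z + δ_z k*(1+(θ_z k*)^{h_z})). -/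
/-!
Equation f₂ = 0 gives b as a function of k (and forces k < 1), f₁ + f₂ = 0 gives
b = 1/(1 + (θ_b z)^{h_b}), and f₃ = 0 is linear in z, giving z as a function of k.
Eliminating b and z leaves one equation g(k) = 0 in k ∈ [0, 1), where g is strictly increasing,
g(0) = -β_b < 0 and g(1) > 0; the intermediate value theorem gives exactly one root.
-/

open Set

noncomputable section

def steadyZ (δz ρz θz : ℝ) (hze : ℕ) (k : ℝ) : ℝ :=
  δz * k * (1 + (θz * k) ^ hze) / (ρz + δz * k * (1 + (θz * k) ^ hze))

/-- Vanishes iff the value of `b` given by `f₂ = 0` equals `1 / (1 + (θ_b z)^{h_b})` with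
`z = steadyZ k`; denominators are cleared. -/
def steadyResidual (κ βk βb θb δz ρz θz : ℝ) (hbe hze : ℕ) (k : ℝ) : ℝ :=
  βk * (κ - 1 + k) * k * (1 + (θb * steadyZ δz ρz θz hze k) ^ hbe) - βb * (1 - k)

def IsSteadyState (κ βk βb θb δz ρz θz : ℝ) (hbe hze : ℕ) (p : ℝ × ℝ × ℝ) : Prop :=
  p ∈ Icc (0 : ℝ) (1 + βk * κ) ×ˢ Icc (0 : ℝ) 1 ×ˢ Icc (0 : ℝ) 1 ∧
    βk * (κ - 1 + p.2.1) * p.2.1 - βb * (1 - p.2.1) * p.1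
        + 1 / (1 + (θb * p.2.2) ^ hbe) - p.1 = 0 ∧
    βb * (1 - p.2.1) * p.1 - βk * (κ - 1 + p.2.1) * p.2.1 = 0 ∧
    δz * (1 - p.2.2) * p.2.1 - ρz * p.2.2 / (1 + (θz * p.2.1) ^ hze) = 0

end

section SteadyZ

variable {δz ρz θz : ℝ} {hze : ℕ} {k : ℝ}

lemma steadyZ_denom_pos (hδz : 0 ≤ δz) (hρz : 0 < ρz) (hθz : 0 ≤ θz) (hk : 0 ≤ k) :
    0 < ρz + δz * k * (1 + (θz * k) ^ hze) := by
  positivity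

lemma steadyZ_mem_Icc (hδz : 0 ≤ δz) (hρz : 0 < ρz) (hθz : 0 ≤ θz) (hk : 0 ≤ k) :
    steadyZ δz ρz θz hze k ∈ Icc 0 1 := by
  have hden := steadyZ_denom_pos (hze := hze) hδz hρz hθz hk
  refine ⟨by unfold steadyZ; positivity, ?_⟩
  rw [steadyZ, div_le_one hden]
  linarith

lemma monotoneOn_steadyZ (hδz : 0 ≤ δz) (hρz : 0 < ρz) (hθz : 0 ≤ θz) :
    MonotoneOn (steadyZ δz ρz θz hze) (Ici 0) := by
  intro k₁ (hk₁ : 0 ≤ k₁) k₂ (hk₂ : 0 ≤ k₂) hle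
  have hden₁ := steadyZ_denom_pos (hze := hze) hδz hρz hθz hk₁
  have hden₂ := steadyZ_denom_pos (hze := hze) hδz hρz hθz hk₂
  have hnum₁ : 0 ≤ δz * k₁ * (1 + (θz * k₁) ^ hze) := by positivity
  have hnum : δz * k₁ * (1 + (θz * k₁) ^ hze) ≤ δz * k₂ * (1 + (θz * k₂) ^ hze) := by gcongr
  rw [steadyZ, steadyZ, div_le_div_iff₀ hden₁ hden₂]
  nlinarith

lemma steadyZ_eq_iff (hδz : 0 ≤ δz) (hρz : 0 < ρz) (hθz : 0 ≤ θz) (hk : 0 ≤ k) {z : ℝ} :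
    δz * (1 - z) * k - ρz * z / (1 + (θz * k) ^ hze) = 0 ↔ z = steadyZ δz ρz θz hze k := by
  have hC : 0 < 1 + (θz * k) ^ hze := by positivity
  have hden := steadyZ_denom_pos (hze := hze) hδz hρz hθz hk
  rw [steadyZ, eq_div_iff hden.ne', sub_eq_zero, eq_div_iff hC.ne']
  constructor <;> intro h <;> linear_combination -h

end SteadyZ

section SteadyResidual

variable {κ βk βb θb δz ρz θz : ℝ} {hbe hze : ℕ}

lemma strictMonoOn_steadyResidual (hκ : 1 ≤ κ) (hβk : 0 < βk) (hβb : 0 ≤ βb) (hθb : 0 ≤ θb)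
    (hδz : 0 ≤ δz) (hρz : 0 < ρz) (hθz : 0 ≤ θz) :
    StrictMonoOn (steadyResidual κ βk βb θb δz ρz θz hbe hze) (Ici 0) := by
  intro k₁ (hk₁ : 0 ≤ k₁) k₂ (hk₂ : 0 ≤ k₂) hlt
  have hz₁ := (steadyZ_mem_Icc (hze := hze) hδz hρz hθz hk₁).1
  have hz := monotoneOn_steadyZ (hze := hze) hδz hρz hθz hk₁ hk₂ hlt.le
  have hquad : βk * (κ - 1 + k₁) * k₁ < βk * (κ - 1 + k₂) * k₂ := by
    have h : (κ - 1 + k₁) * k₁ < (κ - 1 + k₂) * k₂ := by nlinarith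
    simpa only [mul_assoc] using mul_lt_mul_of_pos_left h hβk
  have hquad₂ : 0 ≤ βk * (κ - 1 + k₂) * k₂ := by
    have : 0 ≤ κ - 1 + k₂ := by linarith
    positivity
  have hpow : 1 + (θb * steadyZ δz ρz θz hze k₁) ^ hbe
      ≤ 1 + (θb * steadyZ δz ρz θz hze k₂) ^ hbe := by
    gcongr
  have hpow₁ : 0 < 1 + (θb * steadyZ δz ρz θz hze k₁) ^ hbe := by positivity
  unfold steadyResidual
  nlinarith [mul_le_mul_of_nonneg_left hpow hquad₂, mul_lt_mul_of_pos_right hquad hpow₁]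

lemma continuousOn_steadyResidual (hδz : 0 ≤ δz) (hρz : 0 < ρz) (hθz : 0 ≤ θz) :
    ContinuousOn (steadyResidual κ βk βb θb δz ρz θz hbe hze) (Ici 0) := by
  have hz : ContinuousOn (steadyZ δz ρz θz hze) (Ici 0) :=
    ContinuousOn.div (by fun_prop) (by fun_prop)
      fun k hk ↦ (steadyZ_denom_pos hδz hρz hθz hk).ne'
  unfold steadyResidual
  fun_prop

lemma steadyResidual_zero : steadyResidual κ βk βb θb δz ρz θz hbe hze 0 = -βb := by
  simp [steadyResidual, steadyZ]

lemma steadyResidual_one_pos (hκ : 1 ≤ κ) (hβk : 0 < βk) (hθb : 0 ≤ θb)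
    (hδz : 0 ≤ δz) (hρz : 0 < ρz) (hθz : 0 ≤ θz) :
    0 < steadyResidual κ βk βb θb δz ρz θz hbe hze 1 := by
  have hz := (steadyZ_mem_Icc (hze := hze) hδz hρz hθz zero_le_one).1
  have hκ₀ : 0 < κ := by linarith
  simp only [steadyResidual, sub_self, mul_zero, sub_zero, sub_add_cancel, mul_one]
  positivity

lemma existsUnique_steadyResidual_eq_zero (hκ : 1 ≤ κ) (hβk : 0 < βk) (hβb : 0 < βb)
    (hθb : 0 ≤ θb) (hδz : 0 ≤ δz) (hρz : 0 < ρz) (hθz : 0 ≤ θz) :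
    ∃! k, k ∈ Ico 0 1 ∧ steadyResidual κ βk βb θb δz ρz θz hbe hze k = 0 := by
  have hcont : ContinuousOn (steadyResidual κ βk βb θb δz ρz θz hbe hze) (Icc 0 1) :=
    (continuousOn_steadyResidual hδz hρz hθz).mono Icc_subset_Ici_self
  obtain ⟨k₀, hk₀, hg₀⟩ := intermediate_value_Ioo zero_le_one hcont
    ⟨by rw [steadyResidual_zero]; linarith, steadyResidual_one_pos hκ hβk hθb hδz hρz hθz⟩
  refine ⟨k₀, ⟨Ioo_subset_Ico_self hk₀, hg₀⟩, fun k ⟨hk, hg⟩ ↦ ?_⟩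
  exact (strictMonoOn_steadyResidual hκ hβk hβb.le hθb hδz hρz hθz).injOn
    hk.1 hk₀.1.le (hg.trans hg₀.symm)

lemma isSteadyState_iff (hκ : 1 ≤ κ) (hβk : 0 < βk) (hβb : 0 < βb) (hθb : 0 ≤ θb)
    (hδz : 0 ≤ δz) (hρz : 0 < ρz) (hθz : 0 ≤ θz) {b k z : ℝ} :
    IsSteadyState κ βk βb θb δz ρz θz hbe hze (b, k, z) ↔
      k ∈ Ico 0 1 ∧ steadyResidual κ βk βb θb δz ρz θz hbe hze k = 0 ∧
        b = βk * (κ - 1 + k) * k / (βb * (1 - k)) ∧ z = steadyZ δz ρz θz hze k := by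
  unfold IsSteadyState steadyResidual
  simp only [mem_prod, mem_Icc, mem_Ico]
  constructor
  · rintro ⟨⟨-, ⟨hk₀, hk₁⟩, hz₀, -⟩, e₁, e₂, e₃⟩
    have hk : k < 1 := hk₁.lt_of_ne <| by
      rintro rfl
      nlinarith [mul_pos hβk (zero_lt_one.trans_le hκ)]
    have hz := (steadyZ_eq_iff hδz hρz hθz hk₀).1 e₃
    have hb : b * (1 + (θb * z) ^ hbe) = 1 := by
      field_simp at e₁
      linear_combination -e₁ - (1 + (θb * z) ^ hbe) * e₂
    refine ⟨⟨hk₀, hk⟩, ?_, ?_, hz⟩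
    · rw [← hz]
      linear_combination (-(1 + (θb * z) ^ hbe)) * e₂ + βb * (1 - k) * hb
    · rw [eq_div_iff (mul_pos hβb (by linarith)).ne']
      linear_combination e₂
  · rintro ⟨⟨hk₀, hk⟩, hg, hb, hz⟩
    have hzI := steadyZ_mem_Icc (hze := hze) hδz hρz hθz hk₀
    rw [← hz] at hg hzI
    have hC : 1 ≤ 1 + (θb * z) ^ hbe := le_add_of_nonneg_right (by have := hzI.1; positivity)
    have hden : 0 < βb * (1 - k) := mul_pos hβb (by linarith)
    have hb' : b = 1 / (1 + (θb * z) ^ hbe) := by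
      rw [hb, div_eq_div_iff hden.ne' (by linarith)]
      linear_combination hg
    have e₂ : βb * (1 - k) * b - βk * (κ - 1 + k) * k = 0 := by
      rw [hb, mul_div_cancel₀ _ hden.ne', sub_self]
    refine ⟨⟨⟨?_, ?_⟩, ⟨hk₀, hk.le⟩, hzI⟩, ?_, e₂, (steadyZ_eq_iff hδz hρz hθz hk₀).2 hz⟩
    · rw [hb']; positivity
    · have : b ≤ 1 := by rw [hb', div_le_one (by linarith)]; exact hC
      nlinarith [mul_nonneg hβk.le (zero_le_one.trans hκ)]
    · linear_combination -e₂ - hb'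

end SteadyResidual

theorem stmt_7_general
    (κ βk βb θb δz ρz θz : ℝ) (hbe hze : ℕ)
    (hκ : 1 ≤ κ) (hβk : 0 < βk) (hβb : 0 < βb) (hθb : 0 < θb)
    (hδz : 0 < δz) (hρz : 0 < ρz) (hθz : 0 < θz) :
    (∃! p : ℝ × ℝ × ℝ,
      p ∈ Set.Icc (0 : ℝ) (1 + βk * κ) ×ˢ Set.Icc (0 : ℝ) 1 ×ˢ Set.Icc (0 : ℝ) 1 ∧
      βk * (κ - 1 + p.2.1) * p.2.1 - βb * (1 - p.2.1) * p.1
          + 1 / (1 + (θb * p.2.2) ^ hbe) - p.1 = 0 ∧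
      βb * (1 - p.2.1) * p.1 - βk * (κ - 1 + p.2.1) * p.2.1 = 0 ∧
      δz * (1 - p.2.2) * p.2.1 - ρz * p.2.2 / (1 + (θz * p.2.1) ^ hze) = 0) ∧
    (∀ p : ℝ × ℝ × ℝ,
      p ∈ Set.Icc (0 : ℝ) (1 + βk * κ) ×ˢ Set.Icc (0 : ℝ) 1 ×ˢ Set.Icc (0 : ℝ) 1 →
      βk * (κ - 1 + p.2.1) * p.2.1 - βb * (1 - p.2.1) * p.1
          + 1 / (1 + (θb * p.2.2) ^ hbe) - p.1 = 0 →
      βb * (1 - p.2.1) * p.1 - βk * (κ - 1 + p.2.1) * p.2.1 = 0 →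
      δz * (1 - p.2.2) * p.2.1 - ρz * p.2.2 / (1 + (θz * p.2.1) ^ hze) = 0 →
      p.1 = βk * (κ - 1 + p.2.1) * p.2.1 / (βb * (1 - p.2.1)) ∧
      p.2.2 = δz * p.2.1 * (1 + (θz * p.2.1) ^ hze)
        / (ρz + δz * p.2.1 * (1 + (θz * p.2.1) ^ hze))) := by
  have hiff : ∀ b k z : ℝ, IsSteadyState κ βk βb θb δz ρz θz hbe hze (b, k, z) ↔ _ :=
    fun b k z ↦ isSteadyState_iff hκ hβk hβb hθb.le hδz.le hρz hθz.le
  obtain ⟨k₀, ⟨hk₀, hg₀⟩, hunique⟩ :=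
    existsUnique_steadyResidual_eq_zero (hbe := hbe) (hze := hze) hκ hβk hβb hθb.le hδz.le hρz
      hθz.le
  refine ⟨⟨(βk * (κ - 1 + k₀) * k₀ / (βb * (1 - k₀)), k₀, steadyZ δz ρz θz hze k₀),
    (hiff _ _ _).2 ⟨hk₀, hg₀, rfl, rfl⟩, ?_⟩, ?_⟩
  · rintro ⟨b, k, z⟩ hp
    obtain ⟨hk, hg, rfl, rfl⟩ := (hiff b k z).1 hp
    obtain rfl := hunique k ⟨hk, hg⟩
    rfl
  · rintro ⟨b, k, z⟩ hM e₁ e₂ e₃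
    obtain ⟨-, -, hb, hz⟩ := (hiff b k z).1 ⟨hM, e₁, e₂, e₃⟩
    exact ⟨hb, hz⟩

/-- The nondimensionalised BR signalling system has exactly one steady state in
`M = [0, 1+βk κ] × [0,1] × [0,1]`, and its components satisfy the given formulas. -/
theorem stmt_7
    (κ βk βb θb ε δz ρz θz : ℝ) (hbe hze : ℕ)
    (hκ : 1 ≤ κ) (hβk : 0 < βk) (hβb : 0 < βb) (hθb : 0 < θb) (hε : 0 < ε)
    (hδz : 0 < δz) (hρz : 0 < ρz) (hθz : 0 < θz) (hhb : 0 < hbe) (hhz : 0 < hze) :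
    (∃! p : ℝ × ℝ × ℝ,
      p ∈ Set.Icc (0 : ℝ) (1 + βk * κ) ×ˢ Set.Icc (0 : ℝ) 1 ×ˢ Set.Icc (0 : ℝ) 1 ∧
      βk * (κ - 1 + p.2.1) * p.2.1 - βb * (1 - p.2.1) * p.1
          + 1 / (1 + (θb * p.2.2) ^ hbe) - p.1 = 0 ∧
      βb * (1 - p.2.1) * p.1 - βk * (κ - 1 + p.2.1) * p.2.1 = 0 ∧
      δz * (1 - p.2.2) * p.2.1 - ρz * p.2.2 / (1 + (θz * p.2.1) ^ hze) = 0) ∧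
    (∀ p : ℝ × ℝ × ℝ,
      p ∈ Set.Icc (0 : ℝ) (1 + βk * κ) ×ˢ Set.Icc (0 : ℝ) 1 ×ˢ Set.Icc (0 : ℝ) 1 →
      βk * (κ - 1 + p.2.1) * p.2.1 - βb * (1 - p.2.1) * p.1
          + 1 / (1 + (θb * p.2.2) ^ hbe) - p.1 = 0 →
      βb * (1 - p.2.1) * p.1 - βk * (κ - 1 + p.2.1) * p.2.1 = 0 →
      δz * (1 - p.2.2) * p.2.1 - ρz * p.2.2 / (1 + (θz * p.2.1) ^ hze) = 0 →
      p.1 = βk * (κ - 1 + p.2.1) * p.2.1 / (βb * (1 - p.2.1)) ∧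
      p.2.2 = δz * p.2.1 * (1 + (θz * p.2.1) ^ hze)
        / (ρz + δz * p.2.1 * (1 + (θz * p.2.1) ^ hze))) :=
  stmt_7_general κ βk βb θb δz ρz θz hbe hze hκ hβk hβb hθb hδz hρz hθz
end

section
/- Let (b*,k*,z*) be a steady state of the nondimensionalised BR system lying in [0,1+β_k κ]×[0,1)×[0,1]. Then the coefficients of the characteristic polynomial λ³ + a₂λ² + a₁λ + a₀ of the Jacobian at (b*,k*,z*) are all strictly positive, where a₂ = β_b(1−k*) + 1 + (β_b/ε)b* + (β_k/ε)(κ−1+2k*) + δ_z k* + ρ_z/(1+(θ_z k*)^{h_z}), a₁ = (1/ε)(β_b b* + β_k(κ−1+2k*))(β_b(1−k*) + 2 + δ_z k* + ρ_z/(1+(θ_z k*)^{h_z})) + (β_b(1−k*)+1)(δ_z k* + ρ_z/(1+(θ_z k*)^{h_z})), and a₀ = (1/ε)β_b(1−k*) · θ_b h_b (θ_b z*)^{h_b−1}/(1+(θ_b z*)^{h_b})² · (δ_z(1−z*) + ρ_z z* θ_z h_z (θ_z k*)^{h_z−1}/(1+(θ_z k*)^{h_z})²) + (1/ε)(β_b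 b* + β_k(κ−1+2k*))(δ_z k* + ρ_z/(1+(θ_z k*)^{h_z})). -/
/-!
Every coefficient is a sum of products of quantities that are positive on the domain:
the parameters, `b*`, `k*`, `z*`, `1 - k*`, `1 - z*`, the Hill denominators and their
derivatives, and `κ - 1 + 2 k*`, which is positive because `κ ≥ 1` and `k* > 0`.
-/

theorem stmt_8_general
    (κ βk βb θb ε δz ρz θz : ℝ) (hbe hze : ℕ)
    (hκ : 1 ≤ κ) (hβk : 0 < βk) (hβb : 0 < βb) (hθb : 0 < θb) (hε : 0 < ε)
    (hδz : 0 < δz) (hρz : 0 < ρz) (hθz : 0 < θz) (hhb : 1 ≤ hbe) (hhz : 1 ≤ hze)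
    (bs ks zs : ℝ)
    (hbs : 0 < bs)
    (hks : 0 < ks) (hks' : ks < 1) (hzs : 0 < zs) (hzs' : zs < 1)
    (a₂ a₁ a₀ : ℝ)
    (ha₂ : a₂ = βb * (1 - ks) + 1 + (βb / ε) * bs + (βk / ε) * (κ - 1 + 2 * ks)
      + δz * ks + ρz / (1 + (θz * ks) ^ hze))
    (ha₁ : a₁ = (1 / ε) * (βb * bs + βk * (κ - 1 + 2 * ks)) *
        (βb * (1 - ks) + 2 + δz * ks + ρz / (1 + (θz * ks) ^ hze))
      + (βb * (1 - ks) + 1) * (δz * ks + ρz / (1 + (θz * ks) ^ hze)))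
    (ha₀ : a₀ = (1 / ε) * (βb * (1 - ks)) *
        (θb * (hbe : ℝ) * (θb * zs) ^ (hbe - 1) / (1 + (θb * zs) ^ hbe) ^ 2) *
        (δz * (1 - zs)
          + ρz * zs * θz * (hze : ℝ) * (θz * ks) ^ (hze - 1) / (1 + (θz * ks) ^ hze) ^ 2)
      + (1 / ε) * (βb * bs + βk * (κ - 1 + 2 * ks)) *
        (δz * ks + ρz / (1 + (θz * ks) ^ hze))) :
    0 < a₂ ∧ 0 < a₁ ∧ 0 < a₀ := by
  subst ha₂ ha₁ ha₀
  have hk_compl : 0 < 1 - ks := by linarith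
  have hz_compl : 0 < 1 - zs := by linarith
  have hκk : 0 < κ - 1 + 2 * ks := by linarith
  have hbe_pos : (0 : ℝ) < hbe := by exact_mod_cast hhb
  have hze_pos : (0 : ℝ) < hze := by exact_mod_cast hhz
  exact ⟨by positivity, by positivity, by positivity⟩

/-- At a steady state of the nondimensionalised BR system, all coefficients of the
characteristic polynomial of the Jacobian are strictly positive. -/
theorem stmt_8
    (κ βk βb θb ε δz ρz θz : ℝ) (hbe hze : ℕ)
    (hκ : 1 ≤ κ) (hβk : 0 < βk) (hβb : 0 < βb) (hθb : 0 < θb) (hε : 0 < ε)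
    (hδz : 0 < δz) (hρz : 0 < ρz) (hθz : 0 < θz) (hhb : 1 ≤ hbe) (hhz : 1 ≤ hze)
    (bs ks zs : ℝ)
    (hbs : 0 < bs) (hbs' : bs ≤ 1 + βk * κ)
    (hks : 0 < ks) (hks' : ks < 1) (hzs : 0 < zs) (hzs' : zs < 1)
    (heq1 : βk * (κ - 1 + ks) * ks - βb * (1 - ks) * bs
      + 1 / (1 + (θb * zs) ^ hbe) - bs = 0)
    (heq2 : βb * (1 - ks) * bs - βk * (κ - 1 + ks) * ks = 0)
    (heq3 : δz * (1 - zs) * ks - ρz * zs / (1 + (θz * ks) ^ hze) = 0)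
    (a₂ a₁ a₀ : ℝ)
    (ha₂ : a₂ = βb * (1 - ks) + 1 + (βb / ε) * bs + (βk / ε) * (κ - 1 + 2 * ks)
      + δz * ks + ρz / (1 + (θz * ks) ^ hze))
    (ha₁ : a₁ = (1 / ε) * (βb * bs + βk * (κ - 1 + 2 * ks)) *
        (βb * (1 - ks) + 2 + δz * ks + ρz / (1 + (θz * ks) ^ hze))
      + (βb * (1 - ks) + 1) * (δz * ks + ρz / (1 + (θz * ks) ^ hze)))
    (ha₀ : a₀ = (1 / ε) * (βb * (1 - ks)) *
        (θb * (hbe : ℝ) * (θb * zs) ^ (hbe - 1) / (1 + (θb * zs) ^ hbe) ^ 2) *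
        (δz * (1 - zs)
          + ρz * zs * θz * (hze : ℝ) * (θz * ks) ^ (hze - 1) / (1 + (θz * ks) ^ hze) ^ 2)
      + (1 / ε) * (βb * bs + βk * (κ - 1 + 2 * ks)) *
        (δz * ks + ρz / (1 + (θz * ks) ^ hze))) :
    0 < a₂ ∧ 0 < a₁ ∧ 0 < a₀ :=
  stmt_8_general κ βk βb θb ε δz ρz θz hbe hze hκ hβk hβb hθb hε hδz hρz hθz hhb hhz bs ks zs hbs
    hks hks' hzs hzs' a₂ a₁ a₀ ha₂ ha₁ ha₀
end
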